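/- arXiv:2309.14501 — 6 statements merged into one kernel-verified Lean document; each statement's English description precedes it below -/
import Mathlib

section
/- For every integer a ≥ 3, z(2^a) = 3·2^{a-2}. -/
/-- The order of appearance of `n` in the Fibonacci sequence: the smallest
positive integer `ℓ` such that `n` divides the `ℓ`-th Fibonacci number. -/
noncomputable def z (n : ℕ) : ℕ := sInf {ℓ : ℕ | 0 < ℓ ∧ n ∣ Nat.fib ℓ}

/-!
Since `gcd (F ℓ) (F m) = F (gcd ℓ m)`, the indices `ℓ` with `n ∣ F ℓ` are closed under
`gcd`, so `z n = m` as soon as `n ∣ F m` but `n ∤ F (m / p)` for every prime `p ∣ m`.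
For `m = 3 · 2 ^ (a - 2)` this is checked with `F (2k + 2) = F (k + 1) · (2 F k + F (k + 1))`:
`F k` is odd for `3 ∤ k`, so doubling the index of `F (3 · 2 ^ b)`, `b ≥ 1`, raises its
`2`-adic valuation `b + 2` by exactly one.
-/

theorem z_eq_of_not_dvd_fib_div_prime {n m : ℕ} (hm : 0 < m) (hdvd : n ∣ Nat.fib m)
    (hmin : ∀ p, p.Prime → p ∣ m → ¬ n ∣ Nat.fib (m / p)) : z n = m := by
  refine IsLeast.csInf_eq ⟨⟨hm, hdvd⟩, fun ℓ ⟨hℓ, hnℓ⟩ => ?_⟩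
  have hng : n ∣ Nat.fib (Nat.gcd ℓ m) := Nat.fib_gcd ℓ m ▸ Nat.dvd_gcd hnℓ hdvd
  obtain ⟨k, hk⟩ := Nat.gcd_dvd_right ℓ m
  suffices k = 1 by
    rw [this, mul_one] at hk
    exact Nat.le_of_dvd hℓ (hk ▸ Nat.gcd_dvd_left ℓ m)
  by_contra hk1
  obtain ⟨p, hp, hpk⟩ := Nat.exists_prime_and_dvd hk1
  have hgcd : Nat.gcd ℓ m ∣ m / p := by
    refine Nat.dvd_div_of_mul_dvd ?_
    conv_rhs => rw [hk, mul_comm]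
    exact mul_dvd_mul_right hpk _
  exact hmin p hp (hpk.trans (Dvd.intro_left _ hk.symm)) (hng.trans (Nat.fib_dvd _ _ hgcd))

theorem two_dvd_fib_iff {n : ℕ} : 2 ∣ Nat.fib n ↔ 3 ∣ n := by
  refine ⟨fun h => ?_, Nat.fib_dvd 3 n⟩
  by_contra h3
  have hcop : Nat.gcd 3 n = 1 := (Nat.Prime.coprime_iff_not_dvd Nat.prime_three).mpr h3
  have h2 : 2 ∣ Nat.fib (Nat.gcd 3 n) := Nat.fib_gcd 3 n ▸ Nat.dvd_gcd (dvd_refl 2) h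
  rw [hcop] at h2
  exact absurd h2 (by decide)

theorem exists_odd_fib_three_mul_two_pow (b : ℕ) :
    ∃ t, Odd t ∧ Nat.fib (3 * 2 ^ (b + 1)) = 2 ^ (b + 3) * t := by
  induction b with
  | zero => exact ⟨1, odd_one, by decide⟩
  | succ b ih =>
    obtain ⟨t, ht, hfib⟩ := ih
    obtain ⟨j, hj⟩ : ∃ j, 3 * 2 ^ (b + 1) = j + 1 :=
      ⟨_, (Nat.succ_pred_eq_of_pos (by positivity)).symm⟩
    have hfj : Odd (Nat.fib j) := Nat.not_even_iff_odd.mp fun h => by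
      have := two_dvd_fib_iff.mp (even_iff_two_dvd.mp h)
      omega
    refine ⟨t * (Nat.fib j + 2 * (2 ^ (b + 1) * t)),
      ht.mul (hfj.add_even (even_two_mul _)), ?_⟩
    rw [show 3 * 2 ^ (b + 2) = 2 * j + 2 by rw [pow_succ]; omega, Nat.fib_two_mul_add_two, ← hj,
      hfib]
    ring

theorem not_two_pow_dvd_fib_three_mul_two_pow (b : ℕ) :
    ¬ 2 ^ (b + 3) ∣ Nat.fib (3 * 2 ^ b) := by
  cases b with
  | zero => decide
  | succ b =>
    obtain ⟨t, ht, hfib⟩ := exists_odd_fib_three_mul_two_pow b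
    rw [hfib, pow_succ, Nat.mul_dvd_mul_iff_left (by positivity)]
    exact ht.not_two_dvd_nat

theorem z_two_pow (a : ℕ) (ha : 3 ≤ a) : z (2 ^ a) = 3 * 2 ^ (a - 2) := by
  obtain ⟨b, rfl⟩ : ∃ b, a = b + 3 := ⟨a - 3, by omega⟩
  rw [show b + 3 - 2 = b + 1 by omega]
  refine z_eq_of_not_dvd_fib_div_prime (by positivity) ?_ fun p hp hpm => ?_
  · obtain ⟨t, -, hfib⟩ := exists_odd_fib_three_mul_two_pow b
    exact ⟨t, hfib⟩
  rcases (Nat.Prime.dvd_mul hp).mp hpm with h3 | h2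
  · rw [(Nat.prime_dvd_prime_iff_eq hp Nat.prime_three).mp h3, Nat.mul_div_cancel_left _ three_pos]
    intro h
    have h3 := two_dvd_fib_iff.mp ((dvd_pow_self 2 (by omega)).trans h)
    exact absurd (Nat.prime_three.dvd_of_dvd_pow h3) (by decide)
  · rw [(Nat.prime_dvd_prime_iff_eq hp Nat.prime_two).mp (hp.dvd_of_dvd_pow h2), pow_succ 2 b,
      ← mul_assoc, Nat.mul_div_cancel _ two_pos]
    exact not_two_pow_dvd_fib_three_mul_two_pow b
end

section
/- For every positive integer b, z(3^b) = 4·3^{b-1}. -/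
/-!
For even `n` the tripling identity reads `F (3 n) = F n * (5 F n ^ 2 + 3)`; when `3 ∣ F n` the
second factor is `3` modulo `9`, so tripling raises the `3`-adic valuation by exactly one, and
`v₃ (F (4 * 3 ^ k)) = k + 1`. Since `n ∣ F m ↔ z n ∣ m`, the number `z (3 ^ (k + 1))` divides
`4 * 3 ^ k` and is a multiple of `z 3 = 4`, hence equals `4 * 3 ^ c` with `c ≤ k`; the valuation
then forces `c = k`.
-/

theorem Int.fib_three_mul (n : ℤ) :
    fib (3 * n) = fib n * (5 * fib n ^ 2 + 3 * (-1) ^ n.natAbs) := by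
  have hcassini := fib_succ_mul_fib_pred_sub_fib_sq n
  have hrec : fib (n + 1) = fib (n - 1) + fib n := by
    simpa [sub_add_cancel, show n - 1 + 2 = n + 1 by ring] using fib_add_two (n - 1)
  rw [show 3 * n = n + 2 * n by ring, fib_add, fib_two_mul, fib_two_mul_add_one]
  linear_combination 3 * fib n * hcassini + fib n * (fib n + fib (n + 1)) * hrec

theorem Nat.fib_three_mul_of_even {n : ℕ} (hn : Even n) :
    fib (3 * n) = fib n * (5 * fib n ^ 2 + 3) := by
  have h := Int.fib_three_mul n
  rw [Int.natAbs_natCast, hn.neg_one_pow, mul_one, ← Nat.cast_ofNat, ← Nat.cast_mul,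
    Int.fib_natCast, Int.fib_natCast] at h
  exact_mod_cast h

theorem padicValNat_three_fib_three_mul {n : ℕ} (hn : n ≠ 0) (h4 : 4 ∣ n) :
    padicValNat 3 (Nat.fib (3 * n)) = padicValNat 3 (Nat.fib n) + 1 := by
  obtain ⟨u, hu⟩ : 3 ∣ Nat.fib n := Nat.fib_dvd 4 n h4
  have hfactor : 5 * Nat.fib n ^ 2 + 3 = 3 * (15 * u ^ 2 + 1) := by rw [hu]; ring
  have hcoprime : ¬ 3 ∣ 15 * u ^ 2 + 1 := by
    rw [Nat.dvd_add_right (Dvd.intro (5 * u ^ 2) (by ring))]; norm_num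
  rw [Nat.fib_three_mul_of_even (even_iff_two_dvd.2 (dvd_trans (by norm_num) h4)), hfactor,
    padicValNat.mul (by simpa using hn) (by positivity),
    padicValNat.mul (by norm_num) (by positivity), padicValNat_self,
    padicValNat.eq_zero_of_not_dvd hcoprime]

theorem padicValNat_three_fib_four_mul_three_pow (k : ℕ) :
    padicValNat 3 (Nat.fib (4 * 3 ^ k)) = k + 1 := by
  induction k with
  | zero => simp [show Nat.fib 4 = 3 by rfl]
  | succ k ih =>
    rw [pow_succ', mul_left_comm, padicValNat_three_fib_three_mul (by positivity)
      (dvd_mul_right 4 _), ih]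

theorem three_pow_dvd_fib_four_mul_three_pow_iff {j k : ℕ} :
    3 ^ j ∣ Nat.fib (4 * 3 ^ k) ↔ j ≤ k + 1 := by
  rw [padicValNat_dvd_iff_le (by simp), padicValNat_three_fib_four_mul_three_pow]

section OrderOfAppearance

variable {n ℓ : ℕ}

theorem z_pos_and_dvd_fib_z (hℓ : 0 < ℓ) (h : n ∣ Nat.fib ℓ) :
    0 < z n ∧ n ∣ Nat.fib (z n) :=
  Nat.sInf_mem (s := {ℓ : ℕ | 0 < ℓ ∧ n ∣ Nat.fib ℓ}) ⟨ℓ, hℓ, h⟩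

theorem dvd_fib_iff_z_dvd (hℓ : 0 < ℓ) (h : n ∣ Nat.fib ℓ) (m : ℕ) :
    n ∣ Nat.fib m ↔ z n ∣ m := by
  obtain ⟨hz, hdvd⟩ := z_pos_and_dvd_fib_z hℓ h
  refine ⟨fun hm => ?_, fun hm => hdvd.trans (Nat.fib_dvd _ _ hm)⟩
  have hgcd : n ∣ Nat.fib (m.gcd (z n)) := Nat.fib_gcd m (z n) ▸ Nat.dvd_gcd hm hdvd
  have : m.gcd (z n) = z n :=
    le_antisymm (Nat.le_of_dvd hz (Nat.gcd_dvd_right m _))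
      (Nat.sInf_le ⟨Nat.gcd_pos_of_pos_right m hz, hgcd⟩)
  exact this ▸ Nat.gcd_dvd_left m (z n)

end OrderOfAppearance

theorem z_three : z 3 = 4 := by
  obtain ⟨hpos, hdvd⟩ := z_pos_and_dvd_fib_z (n := 3) (ℓ := 4) (by norm_num) (by decide)
  have hle : z 3 ≤ 4 := Nat.sInf_le ⟨by norm_num, by decide⟩
  interval_cases z 3 <;> revert hdvd <;> decide

theorem three_dvd_fib_iff {m : ℕ} : 3 ∣ Nat.fib m ↔ 4 ∣ m :=
  z_three ▸ dvd_fib_iff_z_dvd (ℓ := 4) (by norm_num) (by decide) m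

theorem z_three_pow (b : ℕ) (hb : 0 < b) : z (3 ^ b) = 4 * 3 ^ (b - 1) := by
  obtain ⟨k, rfl⟩ : ∃ k, b = k + 1 := ⟨b - 1, by omega⟩
  rw [Nat.add_sub_cancel]
  have hfib : 3 ^ (k + 1) ∣ Nat.fib (4 * 3 ^ k) :=
    three_pow_dvd_fib_four_mul_three_pow_iff.2 le_rfl
  obtain ⟨-, hz⟩ := z_pos_and_dvd_fib_z (by positivity) hfib
  obtain ⟨e, he⟩ := three_dvd_fib_iff.1 ((dvd_pow_self 3 k.succ_ne_zero).trans hz)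
  have he_dvd : e ∣ 3 ^ k := Nat.dvd_of_mul_dvd_mul_left (by norm_num)
    (he ▸ (dvd_fib_iff_z_dvd (by positivity) hfib _).1 hfib)
  obtain ⟨c, hck, rfl⟩ := (Nat.dvd_prime_pow Nat.prime_three).1 he_dvd
  have hkc : k + 1 ≤ c + 1 := three_pow_dvd_fib_four_mul_three_pow_iff.1 (he ▸ hz)
  rw [he, le_antisymm hck (by omega)]
end

section
/- Let p be an odd prime and e a positive integer, and let a be the exact power of p dividing F_{z(p)} (i.e., a is the p-adic valuation of F_{z(p)}); then a ≥ 1 and z(p^e) = p^{max(e - a, 0)}·z(p). -/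
open Nat Finset

def fibMatrix (R : Type*) [Semiring R] : Matrix (Fin 2) (Fin 2) R := !![1, 1; 1, 0]

section FibMatrix

variable {R : Type*} [CommSemiring R]

theorem fibMatrix_sq : fibMatrix R ^ 2 = fibMatrix R + 1 := by
  ext i j
  fin_cases i <;> fin_cases j <;> simp [fibMatrix, sq, Matrix.mul_apply]

theorem fibMatrix_pow_succ (n : ℕ) :
    fibMatrix R ^ (n + 1) = (fib (n + 1) : R) • fibMatrix R + (fib n : R) • 1 := by
  induction n with
  | zero => simp
  | succ n ih =>
    rw [pow_succ, ih, add_mul, smul_mul_assoc, smul_mul_assoc, ← sq, fibMatrix_sq, one_mul,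
      fib_add_two, Nat.cast_add]
    module

theorem fibMatrix_pow_apply_zero_one (n : ℕ) : (fibMatrix R ^ n) 0 1 = fib n := by
  cases n with
  | zero => simp
  | succ n => rw [fibMatrix_pow_succ]; simp [fibMatrix]

end FibMatrix

theorem fib_mul_eq_sum_choose (m k : ℕ) :
    fib (m * (k + 1)) =
      ∑ i ∈ range (m + 1), m.choose i * fib (k + 1) ^ i * fib k ^ (m - i) * fib i := by
  have hpow : fibMatrix ℕ ^ (k + 1) = fib (k + 1) • fibMatrix ℕ + fib k • 1 := by
    simpa using fibMatrix_pow_succ (R := ℕ) k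
  have hcomm : Commute (fib (k + 1) • fibMatrix ℕ) (fib k • 1) :=
    ((Commute.one_right _).smul_left _).smul_right _
  have h := congrFun₂ (hcomm.add_pow m) 0 1
  rw [← hpow, ← pow_mul, mul_comm, fibMatrix_pow_apply_zero_one, Nat.cast_id] at h
  rw [h, Matrix.sum_apply]
  refine sum_congr rfl fun i _ => ?_
  rw [← nsmul_eq_mul', smul_pow, smul_pow, one_pow, smul_mul_assoc, mul_smul_comm, mul_one]
  simp only [Matrix.smul_apply, fibMatrix_pow_apply_zero_one, smul_eq_mul, Nat.cast_id]
  ring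

/-- `fibMatrix` is invertible modulo `n`, hence has finite order there. -/
theorem exists_pos_dvd_fib (n : ℕ) [NeZero n] : ∃ ℓ, 0 < ℓ ∧ n ∣ fib ℓ := by
  have hunit : IsUnit (fibMatrix (ZMod n)) := by
    rw [Matrix.isUnit_iff_isUnit_det, fibMatrix, Matrix.det_fin_two_of]
    simp
  obtain ⟨ℓ, hℓ, hpow⟩ := (isOfFinOrder_of_finite hunit.unit).exists_pow_eq_one
  refine ⟨ℓ, hℓ, (ZMod.natCast_eq_zero_iff _ _).1 ?_⟩
  rw [← fibMatrix_pow_apply_zero_one, ← hunit.unit_spec, ← Units.val_pow_eq_pow_val, hpow]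
  simp

section OrderOfAppearance

variable {n : ℕ}

theorem z_pos_and_dvd_fib (hn : n ≠ 0) : 0 < z n ∧ n ∣ fib (z n) :=
  haveI : NeZero n := ⟨hn⟩
  Nat.sInf_mem (exists_pos_dvd_fib n)

theorem dvd_fib_iff_z_dvd_s9 (hn : n ≠ 0) {ℓ : ℕ} : n ∣ fib ℓ ↔ z n ∣ ℓ := by
  obtain ⟨hz, hzd⟩ := z_pos_and_dvd_fib hn
  refine ⟨fun h => ?_, fun h => hzd.trans (fib_dvd _ _ h)⟩
  rcases eq_or_ne ℓ 0 with rfl | hℓ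
  · exact dvd_zero _
  have hgcd : n ∣ fib (Nat.gcd (z n) ℓ) := by
    rw [fib_gcd]
    exact Nat.dvd_gcd hzd h
  have hle : z n ≤ Nat.gcd (z n) ℓ := Nat.sInf_le ⟨Nat.gcd_pos_of_pos_right _ (pos_of_ne_zero hℓ), hgcd⟩
  rw [← (Nat.gcd_le_left ℓ hz).antisymm hle]
  exact Nat.gcd_dvd_right _ _

theorem z_eq_of_dvd_fib_iff (hn : n ≠ 0) {d : ℕ} (h : ∀ ℓ, n ∣ fib ℓ ↔ d ∣ ℓ) : z n = d :=
  Nat.dvd_antisymm ((dvd_fib_iff_z_dvd_s9 hn).1 ((h d).2 dvd_rfl)) ((h _).1 (z_pos_and_dvd_fib hn).2)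

end OrderOfAppearance

section Valuation

variable {p : ℕ}

theorem factorization_add_of_pow_succ_dvd {x y s : ℕ} (hp : p.Prime) (hx : x ≠ 0)
    (hxs : x.factorization p = s) (hy : p ^ (s + 1) ∣ y) : (x + y).factorization p = s := by
  have hxy : x + y ≠ 0 := by omega
  apply le_antisymm
  · by_contra! h
    have hdvd : p ^ (s + 1) ∣ x :=
      (Nat.dvd_add_left hy).1 ((hp.pow_dvd_iff_le_factorization hxy).2 h)
    have := (hp.pow_dvd_iff_le_factorization hx).1 hdvd
    omega
  · rw [← hp.pow_dvd_iff_le_factorization hxy]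
    exact dvd_add ((hp.pow_dvd_iff_le_factorization hx).2 hxs.ge) ((pow_dvd_pow p s.le_succ).trans hy)

theorem factorization_add_two_le {j : ℕ} (hp : p.Prime) (hodd : Odd p) (hj : 2 ≤ j) :
    j.factorization p + 2 ≤ j := by
  have hp3 : 3 ≤ p := by
    obtain ⟨t, rfl⟩ := hodd
    have := hp.two_le
    omega
  have hbern : 1 + j.factorization p * 2 ≤ 3 ^ j.factorization p := by
    exact_mod_cast one_add_mul_le_pow (by norm_num : (-2 : ℤ) ≤ 2) (j.factorization p)
  have := Nat.ordProj_le p (by omega : j ≠ 0)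
  have := Nat.pow_le_pow_left hp3 (j.factorization p)
  omega

theorem pow_dvd_choose_mul_pow {m j a x : ℕ} (hp : p.Prime) (hodd : Odd p) (hm : m ≠ 0)
    (ha : a ≠ 0) (hx : p ^ a ∣ x) (hj : 2 ≤ j) :
    p ^ (m.factorization p + a + 1) ∣ m.choose j * x ^ j := by
  rcases eq_or_ne (m.choose j) 0 with hc | hc
  · simp [hc]
  obtain ⟨a, rfl⟩ := exists_eq_add_one_of_ne_zero ha
  have hchoose : m * (m - 1).choose (j - 1) = m.choose j * j := by
    have := Nat.add_one_mul_choose_eq (m - 1) (j - 1)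
    rwa [Nat.sub_add_cancel (by omega), Nat.sub_add_cancel (by omega)] at this
  have hc' : (m - 1).choose (j - 1) ≠ 0 := by
    intro h0
    rw [h0, mul_zero] at hchoose
    exact mul_ne_zero hc (by omega) hchoose.symm
  have hv : m.factorization p ≤ (m.choose j).factorization p + j.factorization p := by
    have := congrArg (·.factorization p) hchoose
    simp only [Nat.factorization_mul hm hc', Nat.factorization_mul hc (by omega : j ≠ 0),
      Finsupp.add_apply] at this
    omega
  have hj' := factorization_add_two_le hp hodd hj
  have hexp : m.factorization p + (a + 1) + 1 ≤ (m.choose j).factorization p + j * (a + 1) := by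
    linarith [Nat.le_mul_of_pos_left a (by omega : 0 < j)]
  calc p ^ (m.factorization p + (a + 1) + 1) ∣ p ^ ((m.choose j).factorization p + j * (a + 1)) :=
        pow_dvd_pow p hexp
    _ = p ^ (m.choose j).factorization p * (p ^ (a + 1)) ^ j := by rw [pow_add, pow_mul']
    _ ∣ m.choose j * x ^ j := mul_dvd_mul (Nat.ordProj_dvd _ _) (pow_dvd_pow_of_dvd hx j)

theorem factorization_fib_mul {k m : ℕ} (hp : p.Prime) (hodd : Odd p) (hk : k ≠ 0)
    (hpk : p ∣ fib k) (hm : m ≠ 0) :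
    (fib (m * k)).factorization p = (fib k).factorization p + m.factorization p := by
  obtain ⟨j, rfl⟩ := exists_eq_add_one_of_ne_zero hk
  have hx : fib (j + 1) ≠ 0 := by simp
  have ha : (fib (j + 1)).factorization p ≠ 0 := (hp.factorization_pos_of_dvd hx hpk).ne'
  have hy : ¬p ∣ fib j := fun h =>
    hp.not_dvd_one ((fib_coprime_fib_succ j).gcd_eq_one ▸ Nat.dvd_gcd h hpk)
  have hy0 : fib j ≠ 0 := fun h => hy (h ▸ dvd_zero p)
  have hsplit : fib (m * (j + 1)) = m * fib (j + 1) * fib j ^ (m - 1) +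
      ∑ i ∈ range (m - 1),
        m.choose (i + 2) * fib (j + 1) ^ (i + 2) * fib j ^ (m - (i + 2)) * fib (i + 2) := by
    obtain ⟨m, rfl⟩ := exists_eq_add_one_of_ne_zero hm
    rw [fib_mul_eq_sum_choose, sum_range_succ', sum_range_succ']
    simp only [fib_zero, mul_zero, add_zero, zero_add, choose_one_right, pow_one, fib_one,
      mul_one, Nat.add_sub_cancel]
    ring
  have hlead : (m * fib (j + 1) * fib j ^ (m - 1)).factorization p =
      m.factorization p + (fib (j + 1)).factorization p := by
    rw [Nat.factorization_mul (mul_ne_zero hm hx) (pow_ne_zero _ hy0),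
      Nat.factorization_mul hm hx, Nat.factorization_pow]
    simp [Nat.factorization_eq_zero_of_not_dvd hy]
  rw [hsplit, add_comm ((fib (j + 1)).factorization p),
    factorization_add_of_pow_succ_dvd hp (by positivity) hlead]
  refine dvd_sum fun i _ => dvd_mul_of_dvd_left (dvd_mul_of_dvd_left ?_ _) _
  exact pow_dvd_choose_mul_pow hp hodd hm ha (Nat.ordProj_dvd _ _) (by omega)

theorem prime_pow_dvd_fib_iff {e ℓ : ℕ} (hp : p.Prime) (hodd : Odd p) (he : e ≠ 0) :
    p ^ e ∣ fib ℓ ↔ p ^ (e - (fib (z p)).factorization p) * z p ∣ ℓ := by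
  obtain ⟨hk, hpk⟩ := z_pos_and_dvd_fib hp.ne_zero
  have hmul (m : ℕ) : p ^ e ∣ fib (m * z p) ↔ p ^ (e - (fib (z p)).factorization p) ∣ m := by
    rcases eq_or_ne m 0 with rfl | hm
    · simp
    rw [hp.pow_dvd_iff_le_factorization (by simp [hm, hk.ne']),
      factorization_fib_mul hp hodd hk.ne' hpk hm, hp.pow_dvd_iff_le_factorization hm]
    omega
  by_cases hkℓ : z p ∣ ℓ
  · obtain ⟨m, rfl⟩ := hkℓ
    rw [mul_comm (z p), hmul, Nat.mul_dvd_mul_iff_right hk]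
  · exact iff_of_false
      (fun h => hkℓ ((dvd_fib_iff_z_dvd_s9 hp.ne_zero).1 ((dvd_pow_self p he).trans h)))
      (fun h => hkℓ ((dvd_mul_left _ _).trans h))

end Valuation

theorem z_prime_pow_valuation (p e : ℕ) (hp : p.Prime) (hodd : Odd p)
    (he : 0 < e) :
    1 ≤ (Nat.fib (z p)).factorization p ∧
      z (p ^ e) = p ^ (max (e - (Nat.fib (z p)).factorization p) 0) * z p := by
  obtain ⟨hk, hpk⟩ := z_pos_and_dvd_fib hp.ne_zero
  refine ⟨hp.factorization_pos_of_dvd (fib_pos.2 hk).ne' hpk, ?_⟩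
  rw [max_eq_left (Nat.zero_le _)]
  exact z_eq_of_dvd_fib_iff (pow_ne_zero e hp.ne_zero) fun ℓ =>
    prime_pow_dvd_fib_iff hp hodd he.ne'
end

section
/- For every odd prime p and every positive integer e, there exists an integer r with 0 ≤ r ≤ e - 1 such that z(p^e) = p^r·z(p). -/
namespace Nat

def fibShift (R : Type*) [AddCommGroup R] : Equiv.Perm (R × R) where
  toFun x := (x.2, x.1 + x.2)
  invFun x := (x.2 - x.1, x.1)
  left_inv x := by simp
  right_inv x := by simp

theorem fibShift_pow_apply_zero_one (R : Type*) [Ring R] (k : ℕ) :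
    (fibShift R ^ k) (0, 1) = ((fib k : R), (fib (k + 1) : R)) := by
  induction k with
  | zero => simp
  | succ k ih =>
    rw [_root_.pow_succ', Equiv.Perm.mul_apply, ih]
    simp [fibShift, fib_add_two]

theorem exists_pos_dvd_fib {n : ℕ} (hn : n ≠ 0) : ∃ ℓ, 0 < ℓ ∧ n ∣ fib ℓ := by
  have : NeZero n := ⟨hn⟩
  set σ := fibShift (ZMod n)
  refine ⟨orderOf σ, orderOf_pos σ, ?_⟩
  have h := fibShift_pow_apply_zero_one (ZMod n) (orderOf σ)
  rw [pow_orderOf_eq_one, Equiv.Perm.one_apply, Prod.ext_iff] at h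
  exact (ZMod.natCast_eq_zero_iff _ _).1 h.1.symm

theorem fib_mul_add_one_modEq (m k : ℕ) : fib (k * m + 1) ≡ fib (m + 1) ^ k [MOD fib m] := by
  induction k with
  | zero => simp [Nat.ModEq.refl]
  | succ k ih =>
    calc fib ((k + 1) * m + 1) = fib (k * m) * fib m + fib (k * m + 1) * fib (m + 1) := by
          rw [add_one_mul, fib_add]
      _ ≡ 0 + fib (m + 1) ^ k * fib (m + 1) [MOD fib m] :=
          (modEq_zero_iff_dvd.2 (dvd_mul_left _ _)).add (ih.mul_right _)
      _ = fib (m + 1) ^ (k + 1) := by ring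

theorem fib_mul_modEq (m k : ℕ) :
    fib ((k + 1) * m) ≡ (k + 1) * fib m * fib (m + 1) ^ k [MOD fib m ^ 2] := by
  rcases m with _ | m
  · simp [Nat.ModEq.refl]
  induction k with
  | zero => simp [Nat.ModEq.refl]
  | succ k ih =>
    set F := fib (m + 1)
    set G := fib (m + 2)
    obtain ⟨a, ha⟩ : F ∣ fib ((k + 1) * (m + 1)) := fib_dvd _ _ (dvd_mul_left _ _)
    have hprev : fib m ≡ G [MOD F] := by
      rw [show G = fib m + F from fib_add_two]
      exact add_modEq_right.symm
    have h₁ : fib ((k + 1) * (m + 1)) * fib m ≡ fib ((k + 1) * (m + 1)) * G [MOD F ^ 2] := by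
      simpa only [ha, sq, mul_assoc] using (hprev.mul_left a).mul_left' F
    have h₂ : fib ((k + 1) * (m + 1) + 1) * F ≡ G ^ (k + 1) * F [MOD F ^ 2] := by
      simpa only [sq] using (fib_mul_add_one_modEq (m + 1) (k + 1)).mul_right' F
    calc fib ((k + 2) * (m + 1))
        = fib ((k + 1) * (m + 1)) * fib m + fib ((k + 1) * (m + 1) + 1) * F := by
          rw [show (k + 2) * (m + 1) = (k + 1) * (m + 1) + m + 1 by ring, fib_add]
      _ ≡ (k + 1) * F * G ^ k * G + G ^ (k + 1) * F [MOD F ^ 2] :=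
          (h₁.trans (ih.mul_right G)).add h₂
      _ = (k + 1 + 1) * F * G ^ (k + 1) := by ring

theorem dvd_fib_mul_of_dvd {d k m : ℕ} (hk : d ∣ k * fib m) (hsq : d ∣ fib m ^ 2) :
    d ∣ fib (k * m) := by
  cases k with
  | zero => simp
  | succ k =>
    rw [((fib_mul_modEq m k).of_dvd hsq).dvd_iff dvd_rfl]
    exact hk.mul_right _

theorem pow_succ_dvd_fib_mul {p e m : ℕ} (he : e ≠ 0) (h : p ^ e ∣ fib m) :
    p ^ (e + 1) ∣ fib (p * m) := by
  refine dvd_fib_mul_of_dvd ?_ ?_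
  · rw [_root_.pow_succ']
    exact mul_dvd_mul_left p h
  · calc p ^ (e + 1) ∣ p ^ (e * 2) := pow_dvd_pow p (by omega)
      _ = (p ^ e) ^ 2 := pow_mul p e 2
      _ ∣ fib m ^ 2 := pow_dvd_pow_of_dvd h 2

theorem pow_succ_dvd_fib_pow_mul {p m : ℕ} (h : p ∣ fib m) (e : ℕ) :
    p ^ (e + 1) ∣ fib (p ^ e * m) := by
  induction e with
  | zero => simpa using h
  | succ e ih =>
    rw [_root_.pow_succ' p e, mul_assoc]
    exact pow_succ_dvd_fib_mul e.succ_ne_zero ih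

end Nat

theorem z_pos {n : ℕ} (hn : n ≠ 0) : 0 < z n :=
  (Nat.sInf_mem (Nat.exists_pos_dvd_fib hn)).1

theorem dvd_fib_z {n : ℕ} (hn : n ≠ 0) : n ∣ Nat.fib (z n) :=
  (Nat.sInf_mem (Nat.exists_pos_dvd_fib hn)).2

theorem z_dvd_of_dvd_fib {n ℓ : ℕ} (hn : n ≠ 0) (h : n ∣ Nat.fib ℓ) : z n ∣ ℓ := by
  rcases ℓ.eq_zero_or_pos with rfl | hℓ
  · exact dvd_zero _
  have hgcd : n ∣ Nat.fib (Nat.gcd (z n) ℓ) := by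
    rw [Nat.fib_gcd]
    exact Nat.dvd_gcd (dvd_fib_z hn) h
  have hle : z n ≤ Nat.gcd (z n) ℓ := Nat.sInf_le ⟨Nat.gcd_pos_of_pos_right _ hℓ, hgcd⟩
  have heq : Nat.gcd (z n) ℓ = z n := le_antisymm (Nat.gcd_le_left _ (z_pos hn)) hle
  exact heq ▸ Nat.gcd_dvd_right _ _

theorem z_prime_pow_eq_general (p e : ℕ) (hp : p.Prime) (he : 0 < e) :
    ∃ r : ℕ, r ≤ e - 1 ∧ z (p ^ e) = p ^ r * z p := by
  obtain ⟨e, rfl⟩ : ∃ e', e = e' + 1 := ⟨e - 1, by omega⟩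
  rw [Nat.add_sub_cancel]
  have hpe : p ^ (e + 1) ≠ 0 := pow_ne_zero _ hp.ne_zero
  have hupper : z (p ^ (e + 1)) ∣ p ^ e * z p :=
    z_dvd_of_dvd_fib hpe (Nat.pow_succ_dvd_fib_pow_mul (dvd_fib_z hp.ne_zero) e)
  obtain ⟨t, ht⟩ : z p ∣ z (p ^ (e + 1)) :=
    z_dvd_of_dvd_fib hp.ne_zero ((dvd_pow_self p e.succ_ne_zero).trans (dvd_fib_z hpe))
  have htdvd : t ∣ p ^ e := by
    rw [ht, mul_comm (p ^ e)] at hupper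
    exact Nat.dvd_of_mul_dvd_mul_left (z_pos hp.ne_zero) hupper
  obtain ⟨r, hr, rfl⟩ := (Nat.dvd_prime_pow hp).1 htdvd
  exact ⟨r, hr, by rw [ht, mul_comm]⟩

theorem z_prime_pow_eq (p e : ℕ) (hp : p.Prime) (hodd : Odd p) (he : 0 < e) :
    ∃ r : ℕ, r ≤ e - 1 ∧ z (p ^ e) = p ^ r * z p :=
  z_prime_pow_eq_general p e hp he
end

section
/- For every positive integer a and every non-negative integer b, there exists a non-negative integer k such that z^k(2^a·5^b) = 12·5^b. -/
open Nat (fib)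

namespace Int

theorem fib_five_mul (n : ℤ) :
    fib (5 * n) = 5 * fib n * (5 * fib n ^ 4 + 5 * (-1) ^ n.natAbs * fib n ^ 2 + 1) := by
  have hsum : fib (5 * n) = fib (4 * n - 1) * fib n + fib (4 * n) * fib (n + 1) := by
    rw [← fib_add]; ring_nf
  have hpred : ∀ m, fib (m - 1) = fib (m + 1) - fib m := fun m => by
    rw [fib_eq_fib_add_two_sub_fib_add_one (m - 1)]; ring_nf
  have hquad : fib (4 * n) = fib (2 * n) * (2 * fib (2 * n + 1) - fib (2 * n)) := by
    rw [← fib_two_mul]; ring_nf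
  have hquad' : fib (4 * n + 1) = fib (2 * n + 1) ^ 2 + fib (2 * n) ^ 2 := by
    rw [← fib_two_mul_add_one]; ring_nf
  have hcassini := fib_succ_mul_fib_pred_sub_fib_sq n
  have hsign : ((-1 : ℤ) ^ n.natAbs) ^ 2 = 1 := by rw [← pow_mul, mul_comm, pow_mul]; norm_num
  rw [hsum, hpred, hquad', hquad, fib_two_mul_add_one, fib_two_mul]
  rw [hpred] at hcassini
  set x := fib n
  set y := fib (n + 1)
  set s := (-1 : ℤ) ^ n.natAbs
  linear_combination (25 * x ^ 3 + 5 * x * ((y ^ 2 - y * x - x ^ 2) + s)) * hcassini + 5 * x * hsign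

end Int

theorem exists_fib_five_mul_eq (n : ℕ) :
    ∃ c : ℤ, (fib (5 * n) : ℤ) = 5 * fib n * (5 * c + 1) := by
  refine ⟨fib n ^ 4 + (-1) ^ n * fib n ^ 2, ?_⟩
  have h := Int.fib_five_mul n
  rw [← Nat.cast_ofNat, ← Nat.cast_mul, Int.fib_natCast, Int.fib_natCast,
    Int.natAbs_natCast] at h
  rw [h]; ring

theorem exists_fib_two_mul_eq_of_four_dvd {n : ℕ} (h : 4 ∣ fib n) :
    ∃ c : ℤ, (fib (2 * n) : ℤ) = 2 * fib n * (2 * c + 1) := by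
  have hodd : Odd (fib (n + 1)) := by
    rw [Nat.odd_iff, ← Nat.two_dvd_ne_zero]
    intro h2
    have := Nat.eq_one_of_dvd_coprimes (Nat.fib_coprime_fib_succ n) ((dvd_mul_right 2 2).trans h) h2
    omega
  obtain ⟨t, ht⟩ := h
  obtain ⟨u, hu⟩ := hodd
  refine ⟨u - t, ?_⟩
  have h := Int.fib_two_mul n
  rw [← Nat.cast_ofNat, ← Nat.cast_mul, Int.fib_natCast, Int.fib_natCast, ← Nat.cast_one,
    ← Nat.cast_add, Int.fib_natCast] at h
  rw [h, hu, ht]; push_cast; ring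

theorem fib_add_modEq {N T : ℕ} (h0 : fib T ≡ 0 [MOD N]) (h1 : fib (T + 1) ≡ 1 [MOD N]) :
    ∀ n, fib (n + T) ≡ fib n [MOD N]
  | 0 => by simpa using h0
  | n + 1 => by
    rw [add_right_comm, Nat.fib_add]
    simpa using (h0.mul_left (fib n)).add (h1.mul_left (fib (n + 1)))

theorem fib_add_mul_modEq {N T : ℕ} (h0 : fib T ≡ 0 [MOD N]) (h1 : fib (T + 1) ≡ 1 [MOD N])
    (r q : ℕ) : fib (r + T * q) ≡ fib r [MOD N] := by
  induction q with
  | zero => simp [Nat.ModEq.refl]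
  | succ q ih => rw [Nat.mul_succ, ← add_assoc]; exact (fib_add_modEq h0 h1 _).trans ih

def IsOrderOfAppearance (N M : ℕ) : Prop := ∀ ℓ, N ∣ fib ℓ ↔ M ∣ ℓ

namespace IsOrderOfAppearance

theorem z_eq {N M : ℕ} (h : IsOrderOfAppearance N M) : z N = M := by
  have hset : {ℓ | 0 < ℓ ∧ N ∣ fib ℓ} = {ℓ | 0 < ℓ ∧ M ∣ ℓ} :=
    Set.ext fun ℓ => and_congr_right fun _ => h ℓ
  rw [z, hset]
  rcases M.eq_zero_or_pos with rfl | hM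
  · simp +contextual [Nat.pos_iff_ne_zero]
  · refine le_antisymm (Nat.sInf_le ⟨hM, dvd_rfl⟩) ?_
    exact le_csInf ⟨M, hM, dvd_rfl⟩ fun ℓ ⟨hℓ, hMℓ⟩ => Nat.le_of_dvd hℓ hMℓ

theorem mul {N₁ N₂ M₁ M₂ : ℕ} (h₁ : IsOrderOfAppearance N₁ M₁)
    (h₂ : IsOrderOfAppearance N₂ M₂) (hN : N₁.Coprime N₂) :
    IsOrderOfAppearance (N₁ * N₂) (M₁.lcm M₂) := fun ℓ => by
  rw [← hN.lcm_eq_mul, Nat.lcm_dvd_iff, Nat.lcm_dvd_iff, h₁, h₂]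

theorem of_period {N M T : ℕ} (hT : 0 < T) (hMT : M ∣ T) (h0 : fib T ≡ 0 [MOD N])
    (h1 : fib (T + 1) ≡ 1 [MOD N]) (hsmall : ∀ r < T, N ∣ fib r ↔ M ∣ r) :
    IsOrderOfAppearance N M := fun ℓ => by
  have hmod : fib ℓ ≡ fib (ℓ % T) [MOD N] := by
    simpa only [Nat.mod_add_div] using fib_add_mul_modEq h0 h1 (ℓ % T) (ℓ / T)
  rw [hmod.dvd_iff dvd_rfl, hsmall _ (Nat.mod_lt ℓ hT), Nat.dvd_mod_iff hMT]

theorem pow_succ {p k M : ℕ} (h : IsOrderOfAppearance (p ^ k) M) (hp : p ≠ 0) (hpM : p ∣ M)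
    (hfactor : ∀ n, M ∣ p * n → ∃ c : ℤ, (fib (p * n) : ℤ) = p * fib n * (p * c + 1)) :
    IsOrderOfAppearance (p ^ (k + 1)) (p * M) := by
  have hlift : ∀ n, M ∣ p * n → (p ^ (k + 1) ∣ fib (p * n) ↔ p ^ k ∣ fib n) := by
    intro n hn
    obtain ⟨c, hc⟩ := hfactor n hn
    have hcop : IsCoprime (p : ℤ) (p * c + 1) := ⟨-c, 1, by ring⟩
    rw [← Int.natCast_dvd_natCast, ← Int.natCast_dvd_natCast, hc, mul_assoc]
    push_cast
    rw [pow_succ', mul_dvd_mul_iff_left (by exact_mod_cast hp)]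
    exact ⟨hcop.pow_left.dvd_of_dvd_mul_right, (·.mul_right _)⟩
  intro ℓ
  constructor
  · intro hℓ
    have hMℓ : M ∣ ℓ := (h ℓ).mp ((pow_dvd_pow p k.le_succ).trans hℓ)
    obtain ⟨n, rfl⟩ := hpM.trans hMℓ
    exact mul_dvd_mul_left p ((h n).mp ((hlift n hMℓ).mp hℓ))
  · rintro ⟨n, rfl⟩
    rw [mul_assoc]
    exact (hlift _ ((dvd_mul_right M n).mul_left p)).mpr ((h _).mpr (dvd_mul_right M n))

end IsOrderOfAppearance

theorem isOrderOfAppearance_two : IsOrderOfAppearance 2 3 :=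
  .of_period (T := 3) (by norm_num) dvd_rfl (by decide) (by decide) (by decide)

theorem isOrderOfAppearance_three : IsOrderOfAppearance 3 4 :=
  .of_period (T := 8) (by norm_num) (by norm_num) (by decide) (by decide) (by decide)

theorem isOrderOfAppearance_four : IsOrderOfAppearance 4 6 :=
  .of_period (T := 6) (by norm_num) dvd_rfl (by decide) (by decide) (by decide)

theorem isOrderOfAppearance_five : IsOrderOfAppearance 5 5 :=
  .of_period (T := 20) (by norm_num) (by norm_num) (by decide) (by decide) (by decide)

theorem isOrderOfAppearance_six : IsOrderOfAppearance 6 12 :=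
  .of_period (T := 24) (by norm_num) (by norm_num) (by decide) (by decide) (by decide)

theorem isOrderOfAppearance_eight : IsOrderOfAppearance 8 6 :=
  .of_period (T := 12) (by norm_num) (by norm_num) (by decide) (by decide) (by decide)

-- The lift from `2 ^ k` starts only at `16`: from `8` it would need `4 ∣ F 3`.
theorem isOrderOfAppearance_sixteen : IsOrderOfAppearance 16 12 :=
  .of_period (T := 24) (by norm_num) (by norm_num) (by decide) (by decide) (by decide)

theorem isOrderOfAppearance_twenty_four : IsOrderOfAppearance 24 12 :=
  .of_period (T := 24) (by norm_num) (by norm_num) (by decide) (by decide) (by decide)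

theorem isOrderOfAppearance_two_pow (e : ℕ) :
    IsOrderOfAppearance (2 ^ (e + 3)) (3 * 2 ^ (e + 1)) := by
  induction e with
  | zero => exact isOrderOfAppearance_eight
  | succ e ih =>
    rcases e with _ | e
    · exact isOrderOfAppearance_sixteen
    · have hfactor : ∀ n, 3 * 2 ^ (e + 2) ∣ 2 * n →
          ∃ c : ℤ, (fib (2 * n) : ℤ) = 2 * fib n * (2 * c + 1) := by
        intro n hn
        refine exists_fib_two_mul_eq_of_four_dvd (isOrderOfAppearance_four n |>.mpr ?_)
        rw [pow_succ', ← mul_left_comm, Nat.mul_dvd_mul_iff_left two_pos] at hn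
        exact (Dvd.intro (2 ^ e) (by ring)).trans hn
      convert ih.pow_succ two_ne_zero (dvd_mul_of_dvd_right (dvd_pow_self 2 (by omega)) 3) hfactor
        using 1
      ring

theorem isOrderOfAppearance_five_pow (b : ℕ) : IsOrderOfAppearance (5 ^ b) (5 ^ b) := by
  induction b with
  | zero => simp [IsOrderOfAppearance]
  | succ b ih =>
    rcases b with _ | b
    · exact isOrderOfAppearance_five
    · have h := ih.pow_succ (by norm_num) (dvd_pow_self 5 b.succ_ne_zero)
        fun n _ => exists_fib_five_mul_eq n
      rwa [← pow_succ'] at h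

theorem isOrderOfAppearance_three_mul_two_pow (c : ℕ) :
    IsOrderOfAppearance (3 * 2 ^ (c + 4)) (3 * 2 ^ (c + 2)) := by
  have h := isOrderOfAppearance_three.mul (isOrderOfAppearance_two_pow (c + 1))
    (by norm_num [Nat.coprime_pow_right_iff])
  rwa [Nat.lcm_eq_right (Dvd.intro (3 * 2 ^ c) (by ring) : 4 ∣ 3 * 2 ^ (c + 1 + 1))] at h

theorem z_mul_five_pow {N M : ℕ} (h : IsOrderOfAppearance N M) (hN : N.Coprime 5)
    (hM : M.Coprime 5) (b : ℕ) : z (N * 5 ^ b) = M * 5 ^ b := by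
  rw [(h.mul (isOrderOfAppearance_five_pow b) (hN.pow_right b)).z_eq,
    (hM.pow_right b).lcm_eq_mul]

theorem exists_iterate_z_three_mul_two_pow_mul_five_pow (b c : ℕ) :
    ∃ k, z^[k] (3 * 2 ^ (c + 1) * 5 ^ b) = 12 * 5 ^ b := by
  induction c using Nat.strong_induction_on with
  | _ c ih =>
    match c with
    | 0 => exact ⟨1, z_mul_five_pow isOrderOfAppearance_six (by norm_num) (by norm_num) b⟩
    | 1 => exact ⟨0, by norm_num⟩
    | 2 => exact ⟨1, z_mul_five_pow isOrderOfAppearance_twenty_four (by norm_num) (by norm_num) b⟩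
    | c + 3 =>
      obtain ⟨k, hk⟩ := ih (c + 1) (by omega)
      refine ⟨k + 1, ?_⟩
      rw [Function.iterate_succ_apply, z_mul_five_pow (isOrderOfAppearance_three_mul_two_pow c)
        (by norm_num [Nat.coprime_mul_iff_left, Nat.coprime_pow_left_iff])
        (by norm_num [Nat.coprime_mul_iff_left, Nat.coprime_pow_left_iff]), hk]

theorem two_pow_five_pow_reaches (a b : ℕ) (ha : 0 < a) :
    ∃ k : ℕ, z^[k] (2 ^ a * 5 ^ b) = 12 * 5 ^ b := by
  have h2 := z_mul_five_pow isOrderOfAppearance_two (by norm_num) (by norm_num) b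
  have h3 := z_mul_five_pow isOrderOfAppearance_three (by norm_num) (by norm_num) b
  have h4 := z_mul_five_pow isOrderOfAppearance_four (by norm_num) (by norm_num) b
  obtain ⟨k, hk⟩ : ∃ k, z^[k] (6 * 5 ^ b) = 12 * 5 ^ b :=
    exists_iterate_z_three_mul_two_pow_mul_five_pow b 0
  match a, ha with
  | 1, _ => exact ⟨k + 3, by simp [Function.iterate_succ_apply, h2, h3, h4, hk]⟩
  | 2, _ => exact ⟨k + 1, by simp [Function.iterate_succ_apply, h4, hk]⟩
  | e + 3, _ =>
    obtain ⟨k, hk⟩ := exists_iterate_z_three_mul_two_pow_mul_five_pow b e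
    refine ⟨k + 1, ?_⟩
    rw [Function.iterate_succ_apply, z_mul_five_pow (isOrderOfAppearance_two_pow e)
      (by norm_num [Nat.coprime_pow_left_iff])
      (by norm_num [Nat.coprime_mul_iff_left, Nat.coprime_pow_left_iff]), hk]
end

section
/- For every non-negative integer k, the set of positive integers n for which there exists a non-negative integer m with z^m(n) = 12·5^k is infinite; that is, infinitely many integers iterate under z to each fixed point of the form 12·5^k. -/
open Nat

theorem Nat.dvd_of_fib_dvd_fib {m ℓ : ℕ} (hm : 3 ≤ m) (h : fib m ∣ fib ℓ) : m ∣ ℓ := by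
  have hfib : fib (gcd m ℓ) = fib m := by rw [fib_gcd, gcd_eq_left h]
  have hle : gcd m ℓ ≤ m := gcd_le_left ℓ (by omega)
  suffices hgcd : gcd m ℓ = m from hgcd ▸ gcd_dvd_right m ℓ
  by_contra hne
  have : fib (gcd m ℓ) < fib m :=
    calc fib (gcd m ℓ) ≤ fib (m - 1) := fib_mono (by omega)
      _ < fib m := (fib_lt_fib (by omega)).2 (by omega)
  omega

theorem z_fib {m : ℕ} (hm : 3 ≤ m) : z (fib m) = m :=
  IsLeast.csInf_eq ⟨⟨by omega, dvd_rfl⟩,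
    fun _ ⟨hℓ, hdvd⟩ => le_of_dvd hℓ (dvd_of_fib_dvd_fib hm hdvd)⟩

theorem Nat.lt_fib_self {n : ℕ} (hn : 6 ≤ n) : n < fib n := by
  induction n, hn using Nat.le_induction with
  | base => decide
  | succ n hn ih => exact (succ_le_of_lt ih).trans_lt (fib_lt_fib_succ (by omega))

theorem le_iterate_fib {t : ℕ} (ht : 5 ≤ t) (j : ℕ) : t ≤ fib^[j] t :=
  fib_mono.monotone_iterate_of_le_map (le_fib_self ht) (Nat.zero_le j)

theorem strictMono_iterate_fib {t : ℕ} (ht : 6 ≤ t) : StrictMono fun j => fib^[j] t :=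
  strictMono_nat_of_lt_succ fun j => by
    rw [Function.iterate_succ_apply']
    exact lt_fib_self (ht.trans (le_iterate_fib (by omega) j))

theorem iterate_z_iterate_fib {t : ℕ} (ht : 5 ≤ t) (j : ℕ) : z^[j] (fib^[j] t) = t := by
  induction j with
  | zero => rfl
  | succ j ih =>
    rw [Function.iterate_succ_apply' fib, Function.iterate_succ_apply z,
      z_fib ((by omega : 3 ≤ t).trans (le_iterate_fib ht j)), ih]

theorem infinite_setOf_iterate_z_eq {t : ℕ} (ht : 6 ≤ t) :
    {n : ℕ | 0 < n ∧ ∃ m : ℕ, z^[m] n = t}.Infinite :=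
  Set.infinite_of_injective_forall_mem (strictMono_iterate_fib ht).injective fun j =>
    ⟨by have := le_iterate_fib (by omega : 5 ≤ t) j; omega,
      j, iterate_z_iterate_fib (by omega) j⟩

theorem infinitely_many_reach_fixed_point (k : ℕ) :
    {n : ℕ | 0 < n ∧ ∃ m : ℕ, z^[m] n = 12 * 5 ^ k}.Infinite :=
  infinite_setOf_iterate_z_eq (by have := Nat.one_le_pow k 5 (by norm_num); omega)
end
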